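/- Let $m,n$ be positive integers with $n > m \ge 6$ and $mn$ odd. Then $r(K_{1,m-1}, T_n^2) = m+n-5$, where $T_n^2 = S(n-4,2)$ is the tree defined below. -/

import Mathlib

open SimpleGraph

/-- `Contains G H` : the graph `G` contains a copy of `H` as a subgraph. -/
def Contains {V W : Type*} (G : SimpleGraph V) (H : SimpleGraph W) : Prop :=
  ∃ f : W ↪ V, ∀ a b, H.Adj a b → G.Adj (f a) (f b)

/-- The Ramsey number `r(G₁,G₂)`: the smallest positive `p` such that every graph on `p`
vertices contains a copy of `G₁` or its complement contains a copy of `G₂`. -/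
noncomputable def ramseyNumber {α β : Type*} (G₁ : SimpleGraph α) (G₂ : SimpleGraph β) : ℕ :=
  sInf {p | 0 < p ∧ ∀ G : SimpleGraph (Fin p), Contains G G₁ ∨ Contains Gᶜ G₂}

/-- The Turán/extremal number `ex(p; L)`: maximal number of edges of a graph on `p`
vertices with no copy of `L`. -/
noncomputable def exNum {W : Type*} (p : ℕ) (L : SimpleGraph W) : ℕ :=
  sSup {m | ∃ G : SimpleGraph (Fin p), ¬ Contains G L ∧ G.edgeSet.ncard = m}

/-- The maximum degree of a graph. -/
noncomputable def maxDeg {α : Type*} (G : SimpleGraph α) : ℕ :=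
  sSup {d | ∃ v, d = (G.neighborSet v).ncard}

/-- The star `K_{1,m-1}` on `m` vertices, centered at `0`. -/
def starGraph (m : ℕ) : SimpleGraph (Fin m) :=
  SimpleGraph.fromRel (fun i _ => (i : ℕ) = 0)

/-- The double star `S(n₁,n₂)`: vertex `0` is adjacent to `1` and to the `n₁` vertices
`2,…,n₁+1`; vertex `1` is adjacent to the `n₂` vertices `n₁+2,…,n₁+n₂+1`. -/
def doubleStar (n₁ n₂ : ℕ) : SimpleGraph (Fin (n₁ + n₂ + 2)) :=
  SimpleGraph.fromRel (fun i j =>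
    ((i : ℕ) = 0 ∧ (j : ℕ) = 1) ∨
    ((i : ℕ) = 0 ∧ 2 ≤ (j : ℕ) ∧ (j : ℕ) ≤ n₁ + 1) ∨
    ((i : ℕ) = 1 ∧ n₁ + 2 ≤ (j : ℕ)))

/-- The tree `Tₙ''` with edges `v₀vᵢ (1 ≤ i ≤ n-4)`, `v₁v_{n-3}`, `v₁v_{n-2}`, `v₂v_{n-1}`. -/
def treeDD (n : ℕ) : SimpleGraph (Fin n) :=
  SimpleGraph.fromRel (fun i j =>
    ((i : ℕ) = 0 ∧ 1 ≤ (j : ℕ) ∧ (j : ℕ) ≤ n - 4) ∨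
    ((i : ℕ) = 1 ∧ ((j : ℕ) = n - 3 ∨ (j : ℕ) = n - 2)) ∨
    ((i : ℕ) = 2 ∧ (j : ℕ) = n - 1))

/-- The tree `Tₙ'''` with edges `v₀vᵢ (1 ≤ i ≤ n-4)`, `v₁v_{n-3}`, `v₂v_{n-2}`, `v₃v_{n-1}`. -/
def treeDDD (n : ℕ) : SimpleGraph (Fin n) :=
  SimpleGraph.fromRel (fun i j =>
    ((i : ℕ) = 0 ∧ 1 ≤ (j : ℕ) ∧ (j : ℕ) ≤ n - 4) ∨
    ((i : ℕ) = 1 ∧ (j : ℕ) = n - 3) ∨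
    ((i : ℕ) = 2 ∧ (j : ℕ) = n - 2) ∨
    ((i : ℕ) = 3 ∧ (j : ℕ) = n - 1))

/-- The tree `Tₙ¹` with edges `v₀vᵢ (1 ≤ i ≤ n-3)`, `v_{n-4}v_{n-2}`, `v_{n-3}v_{n-1}`. -/
def treeT1 (n : ℕ) : SimpleGraph (Fin n) :=
  SimpleGraph.fromRel (fun i j =>
    ((i : ℕ) = 0 ∧ 1 ≤ (j : ℕ) ∧ (j : ℕ) ≤ n - 3) ∨
    ((i : ℕ) = n - 4 ∧ (j : ℕ) = n - 2) ∨
    ((i : ℕ) = n - 3 ∧ (j : ℕ) = n - 1))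

/-- The tree `Tₙ²` with edges `v₀vᵢ (1 ≤ i ≤ n-3)`, `v_{n-3}v_{n-2}`, `v_{n-3}v_{n-1}`. -/
def treeT2 (n : ℕ) : SimpleGraph (Fin n) :=
  SimpleGraph.fromRel (fun i j =>
    ((i : ℕ) = 0 ∧ 1 ≤ (j : ℕ) ∧ (j : ℕ) ≤ n - 3) ∨
    ((i : ℕ) = n - 3 ∧ ((j : ℕ) = n - 2 ∨ (j : ℕ) = n - 1)))


/-!
Lower bound: for odd `m` the circulant graph on `ℤ/(m+n-6)` with jumps `±1, …, ±(m-3)/2` is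
`(m-3)`-regular, so it has no `K_{1,m-1}`, and its complement is `(n-4)`-regular, so it has no
vertex of degree `n-3` and hence no `Tₙ²`.

Upper bound: let `G` have `m+n-5` vertices and no vertex of degree `m-1`. Since `m+n-5` and `m-2`
are odd, `G` is not `(m-2)`-regular, so `H = Gᶜ` has minimum degree at least `n-4` and a vertex `u`
of degree at least `n-3`. If `deg u ≥ n-1`, or some neighbour of `u` has two neighbours outside
the closed neighbourhood `N[u]`, a copy of `Tₙ²` centred at `u` is immediate. Otherwise each
neighbour of `u` sends at most one edge out of `N[u]`, while each of the `m+n-6-deg u` vertices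
outside `N[u]` sends at least `n-3-(m+n-6-deg u)` edges into it; double counting these edges is
impossible once `n ≥ m+2 ≥ 9`.
-/

open Finset
open scoped Pointwise

namespace SimpleGraph

variable {V : Type*} [Fintype V]

lemma IsContained.exists_le_degree {W : Type*} [Fintype W] {G : SimpleGraph V}
    {H : SimpleGraph W} [DecidableRel G.Adj] [DecidableRel H.Adj] (h : H ⊑ G) (w : W) :
    ∃ v, H.degree w ≤ G.degree v :=
  let ⟨f⟩ := h
  ⟨f w, f.degree_le w⟩

lemma starGraph_isContained_iff {W : Type*} [Fintype W] [DecidableEq V] (r : V)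
    (G : SimpleGraph W) [DecidableRel G.Adj] :
    starGraph r ⊑ G ↔ ∃ v, Fintype.card V - 1 ≤ G.degree v := by
  refine ⟨fun h => by simpa only [degree_starGraph_center] using h.exists_le_degree r,
    fun ⟨v, hv⟩ => ?_⟩
  obtain ⟨e⟩ : Nonempty ({x // x ≠ r} ↪ G.neighborFinset v) :=
    Function.Embedding.nonempty_of_card_le (by
      rw [Fintype.card_coe, card_neighborFinset_eq_degree]
      simpa [Fintype.card_subtype_compl] using hv)
  have he : ∀ x, G.Adj v (e x) := fun x => (G.mem_neighborFinset _ _).1 (e x).2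
  let f : V → W := fun x => if hx : x = r then v else e ⟨x, hx⟩
  have hf : Function.Injective f := fun a b hab => by
    by_cases ha : a = r <;> by_cases hb : b = r <;> simp only [f, ha, hb, dite_true] at hab
    · exact ha.trans hb.symm
    · exact absurd hab (he _).ne
    · exact absurd hab.symm (he _).ne
    · simpa using e.injective (Subtype.ext hab)
  have hadj : ∀ a b, (starGraph r).Adj a b → G.Adj (f a) (f b) := by
    rintro a b ⟨hne, rfl | rfl⟩
    · simpa [f, hne.symm] using he ⟨b, hne.symm⟩
    · simpa [f, hne] using (he ⟨a, hne⟩).symm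
  exact ⟨⟨⟨f, hadj _ _⟩, hf⟩⟩

lemma IsRegularOfDegree.even_card_mul {G : SimpleGraph V} [DecidableRel G.Adj] {d : ℕ}
    (h : G.IsRegularOfDegree d) : Even (Fintype.card V * d) := by
  have := G.sum_degrees_eq_twice_card_edges
  rw [sum_congr rfl fun v _ => h.degree_eq v, sum_const, card_univ, smul_eq_mul] at this
  exact ⟨_, this.trans (two_mul _)⟩

lemma card_compl_insert_neighborFinset_mul_le_degree [DecidableEq V] {H : SimpleGraph V}
    [DecidableRel H.Adj] {δ : ℕ} (hδ : ∀ v, δ ≤ H.degree v) (u : V)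
    (hu : ∀ w ∈ H.neighborFinset u, #(H.neighborFinset w \ insert u (H.neighborFinset u)) ≤ 1) :
    #(insert u (H.neighborFinset u))ᶜ * (δ + 1 - #(insert u (H.neighborFinset u))ᶜ) ≤
      H.degree u := by
  set N := H.neighborFinset u
  set O := (insert u N)ᶜ
  have hupper : ∀ w ∈ N, #(O.bipartiteAbove H.Adj w) ≤ 1 := fun w hw => by
    convert hu w hw using 2
    ext z
    simp [O, mem_bipartiteAbove, and_comm]
  have hlower : ∀ z ∈ O, δ + 1 - #O ≤ #(N.bipartiteBelow H.Adj z) := fun z hz => by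
    have hsub : H.neighborFinset z ⊆ N.bipartiteBelow H.Adj z ∪ O.erase z := fun t ht => by
      rw [mem_neighborFinset] at ht
      have : t ∈ N ∨ t ∈ O := by
        by_cases htu : t = u
        · subst htu; simp [O, N, ht.symm] at hz
        · simp [O, htu, em]
      rcases this with htN | htO
      · exact mem_union_left _ ((mem_bipartiteBelow H.Adj).2 ⟨htN, ht.symm⟩)
      · exact mem_union_right _ (mem_erase.2 ⟨ht.ne', htO⟩)
    have hcard := (card_le_card hsub).trans (card_union_le _ _)
    rw [card_neighborFinset_eq_degree, card_erase_of_mem hz] at hcard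
    have := hδ z
    have := card_pos.2 ⟨z, hz⟩
    omega
  calc #O * (δ + 1 - #O) ≤ ∑ z ∈ O, #(N.bipartiteBelow H.Adj z) := card_nsmul_le_sum _ _ _ hlower
    _ = ∑ w ∈ N, #(O.bipartiteAbove H.Adj w) :=
      (sum_card_bipartiteAbove_eq_sum_card_bipartiteBelow _).symm
    _ ≤ ∑ _w ∈ N, 1 := sum_le_sum hupper
    _ = H.degree u := by simp [N]

lemma circulantGraph_isRegularOfDegree {G : Type*} [AddGroup G] [Fintype G] [DecidableEq G]
    {s : Finset G} (hs : Disjoint s (-s)) (hs0 : 0 ∉ s) :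
    (circulantGraph (s : Set G)).IsRegularOfDegree (2 * #s) := by
  intro v
  have : (circulantGraph (s : Set G)).neighborFinset v =
      (s ∪ -s).map (Equiv.addRight v).toEmbedding := by
    ext w
    simp only [mem_neighborFinset, circulantGraph_adj, mem_coe, mem_map_equiv, mem_union,
      Finset.mem_neg', Equiv.addRight_symm_apply, ← sub_eq_add_neg, neg_sub, or_comm]
    exact and_iff_right_of_imp fun _ hvw => by simp_all
  rw [← card_neighborFinset_eq_degree, this, card_map, card_union_of_disjoint hs, card_neg,
    two_mul]

lemma circulantGraph_Ioc_isRegularOfDegree {N k : ℕ} [NeZero N] (h : 2 * k < N) :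
    (circulantGraph (Ioc (0 : Fin N) ⟨k, by omega⟩ : Set (Fin N))).IsRegularOfDegree (2 * k) := by
  have hcard : #(Ioc (0 : Fin N) ⟨k, by omega⟩) = k := by simp [Fin.card_Ioc]
  have hdisj : Disjoint (Ioc (0 : Fin N) ⟨k, by omega⟩) (-Ioc 0 ⟨k, by omega⟩) := by
    refine Finset.disjoint_left.2 fun x hx hx' => ?_
    rw [Finset.mem_neg', mem_Ioc] at hx'
    rw [mem_Ioc] at hx
    simp only [Fin.lt_def, Fin.le_def, Fin.val_neg', Fin.val_zero] at hx hx'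
    rw [Nat.mod_eq_of_lt (by omega)] at hx'
    omega
  have := circulantGraph_isRegularOfDegree hdisj fun h => lt_irrefl _ (mem_Ioc.1 h).1
  rwa [hcard] at this

end SimpleGraph

lemma contains_iff_isContained {V W : Type*} {G : SimpleGraph V} {H : SimpleGraph W} :
    Contains G H ↔ H ⊑ G :=
  isContained_iff_exists_le_comap.symm

lemma ramseyNumber_eq_succ {α β : Type*} {G₁ : SimpleGraph α} {G₂ : SimpleGraph β} {p : ℕ}
    (hup : ∀ G : SimpleGraph (Fin (p + 1)), Contains G G₁ ∨ Contains Gᶜ G₂)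
    (hlow : ∃ G : SimpleGraph (Fin p), ¬ Contains G G₁ ∧ ¬ Contains Gᶜ G₂) :
    ramseyNumber G₁ G₂ = p + 1 := by
  refine le_antisymm (Nat.sInf_le ⟨p.succ_pos, hup⟩) (le_csInf ⟨_, p.succ_pos, hup⟩ ?_)
  rintro q ⟨hq, hqG⟩
  by_contra! hqp
  obtain ⟨G, hG₁, hG₂⟩ := hlow
  let f := Fin.castLEEmb (Nat.le_of_lt_succ hqp)
  have hcompl : (G.comap f)ᶜ = Gᶜ.comap f := by
    ext a b
    simp [f.injective.eq_iff]
  simp only [contains_iff_isContained] at hG₁ hG₂ hqG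
  rcases hqG (G.comap f) with h | h
  · exact hG₁ (h.trans (Embedding.comap f G).isContained)
  · exact hG₂ (hcompl ▸ h |>.trans (Embedding.comap f Gᶜ).isContained)

lemma starGraph_eq_starGraph_zero {m : ℕ} (hm : 0 < m) :
    _root_.starGraph m = SimpleGraph.starGraph ⟨0, hm⟩ := by
  ext i j
  simp [_root_.starGraph, Fin.ext_iff]

instance (n : ℕ) : DecidableRel (treeT2 n).Adj := fun _ _ => inferInstanceAs (Decidable (_ ∧ _))

lemma treeT2_degree_zero {n : ℕ} (hn : 4 ≤ n) :
    (treeT2 n).degree ⟨0, by omega⟩ = n - 3 := by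
  have : (treeT2 n).neighborFinset ⟨0, by omega⟩ = Icc ⟨1, by omega⟩ ⟨n - 3, by omega⟩ := by
    ext j
    rw [mem_neighborFinset]
    simp [treeT2, Fin.le_def, Fin.ext_iff]
    omega
  rw [← card_neighborFinset_eq_degree, this, Fin.card_Icc]
  exact Nat.add_sub_cancel _ _

lemma treeT2_le_comap_cons_append {V : Type*} {H : SimpleGraph V} {k : ℕ} {u w x y : V}
    {g : Fin k → V} (hg : ∀ i, H.Adj u (g i)) (huw : H.Adj u w) (hwx : H.Adj w x)
    (hwy : H.Adj w y) :
    treeT2 (k + 4) ≤ H.comap (Fin.cons u (Fin.append g ![w, x, y]) : Fin (k + 4) → V) := by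
  set f : Fin (k + 4) → V := Fin.cons u (Fin.append g ![w, x, y])
  have hcenter : ∀ c : Fin (k + 3), (c : ℕ) ≤ k → H.Adj u (f c.succ) := by
    intro c hc
    induction c using Fin.addCases with
    | left i => simpa [f] using hg i
    | right j =>
      obtain rfl : j = 0 := by ext; simp at hc; omega
      simpa [f] using huw
  have hrel : ∀ a b : Fin (k + 4), (a : ℕ) = 0 ∧ 1 ≤ (b : ℕ) ∧ (b : ℕ) ≤ k + 4 - 3 ∨
      (a : ℕ) = k + 4 - 3 ∧ ((b : ℕ) = k + 4 - 2 ∨ (b : ℕ) = k + 4 - 1) → H.Adj (f a) (f b) := by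
    rintro a b (⟨ha, hb⟩ | ⟨ha, hb⟩)
    · obtain rfl : a = 0 := Fin.ext ha
      obtain ⟨c, rfl⟩ := Fin.exists_succ_eq.2 (Fin.ne_of_val_ne (by simp; omega) : b ≠ 0)
      exact hcenter c (by simp at hb; omega)
    · obtain rfl : a = (Fin.natAdd k (0 : Fin 3)).succ := Fin.ext (by simp; omega)
      rcases hb with hb | hb
      · obtain rfl : b = (Fin.natAdd k (1 : Fin 3)).succ := Fin.ext (by simp; omega)
        simpa [f] using hwx
      · obtain rfl : b = (Fin.natAdd k (2 : Fin 3)).succ := Fin.ext (by simp; omega)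
        simpa [f] using hwy
  rintro a b ⟨-, hab | hab⟩
  · exact hrel a b hab
  · exact (hrel b a hab).symm

lemma treeT2_isContained_of_adj {V : Type*} [Fintype V] [DecidableEq V] {H : SimpleGraph V}
    [DecidableRel H.Adj] {k : ℕ} {u w x y : V} (huw : H.Adj u w) (hwx : H.Adj w x)
    (hwy : H.Adj w y) (hxy : x ≠ y) (hxu : x ≠ u) (hyu : y ≠ u)
    (hk : k ≤ #(H.neighborFinset u \ {w, x, y})) : treeT2 (k + 4) ⊑ H := by
  obtain ⟨g⟩ : Nonempty (Fin k ↪ (H.neighborFinset u \ {w, x, y} : Finset V)) :=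
    Function.Embedding.nonempty_of_card_le (by rwa [Fintype.card_coe, Fintype.card_fin])
  have hg : ∀ i, H.Adj u (g i) ∧ (g i : V) ≠ w ∧ (g i : V) ≠ x ∧ (g i : V) ≠ y := fun i => by
    have h := (g i).2
    rw [mem_sdiff, mem_neighborFinset] at h
    simpa [not_or] using h
  have hinj : Function.Injective (Fin.cons u (Fin.append (fun i => (g i : V)) ![w, x, y]) :
      Fin (k + 4) → V) := by
    refine Fin.cons_injective_iff.2 ⟨?_, Fin.append_injective_iff.2 ⟨?_, ?_, ?_⟩⟩
    · rintro ⟨c, hc⟩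
      induction c using Fin.addCases with
      | left i => exact (hg i).1.ne (by simpa using hc.symm)
      | right j => fin_cases j <;> simp_all [huw.ne']
    · exact Subtype.val_injective.comp g.injective
    · simp only [Matrix.vecCons, Fin.cons_injective_iff]
      simp [hwx.ne, hwy.ne, hxy, Function.injective_of_subsingleton]
    · intro i j
      fin_cases j <;> simp [hg i]
  exact isContained_iff_exists_le_comap.2
    ⟨⟨_, hinj⟩, treeT2_le_comap_cons_append (fun i => (hg i).1) huw hwx hwy⟩

lemma treeT2_isContained_of_add_three_le_degree {V : Type*} [Fintype V] [DecidableEq V]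
    {H : SimpleGraph V} [DecidableRel H.Adj] {k : ℕ} (hδ : ∀ v, 3 ≤ H.degree v) {u : V}
    (hu : k + 3 ≤ H.degree u) : treeT2 (k + 4) ⊑ H := by
  obtain ⟨w, hw⟩ : (H.neighborFinset u).Nonempty := card_pos.1 (by simp; omega)
  rw [mem_neighborFinset] at hw
  have hw2 : 1 < #((H.neighborFinset w).erase u) := by
    have := pred_card_le_card_erase (a := u) (s := H.neighborFinset w)
    rw [card_neighborFinset_eq_degree] at this
    have := hδ w
    omega
  obtain ⟨x, hx, y, hy, hxy⟩ := one_lt_card.1 hw2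
  rw [mem_erase, mem_neighborFinset] at hx hy
  refine treeT2_isContained_of_adj hw hx.2 hy.2 hxy hx.1 hy.1 ?_
  have := le_card_sdiff {w, x, y} (H.neighborFinset u)
  have := card_le_three (a := w) (b := x) (c := y)
  rw [card_neighborFinset_eq_degree] at *
  omega

lemma treeT2_isContained_of_le_degree {V : Type*} [Fintype V] [DecidableEq V]
    {H : SimpleGraph V} [DecidableRel H.Adj] {n : ℕ} (hlo : n + 2 ≤ Fintype.card V)
    (hhi : Fintype.card V + 7 ≤ 2 * n) (hδ : ∀ v, n - 4 ≤ H.degree v) {u : V}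
    (hu : n - 3 ≤ H.degree u) : treeT2 n ⊑ H := by
  obtain ⟨k, rfl⟩ : ∃ k, n = k + 4 := ⟨n - 4, by omega⟩
  simp only [Nat.add_sub_cancel] at hδ
  set N := H.neighborFinset u
  have hN : #N = H.degree u := card_neighborFinset_eq_degree _ _
  by_cases hbig : k + 3 ≤ H.degree u
  · exact treeT2_isContained_of_add_three_le_degree (fun v => by have := hδ v; omega) hbig
  by_cases hfar : ∃ w ∈ N, 1 < #(H.neighborFinset w \ insert u N)
  · obtain ⟨w, hw, hfar⟩ := hfar
    obtain ⟨x, hx, y, hy, hxy⟩ := one_lt_card.1 hfar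
    simp only [mem_sdiff, mem_insert, not_or, mem_neighborFinset] at hx hy
    refine treeT2_isContained_of_adj ((mem_neighborFinset _ _ _).1 hw) hx.1 hy.1 hxy hx.2.1 hy.2.1
      (?_ : k ≤ #(N \ _))
    have : N.erase w ⊆ N \ {w, x, y} := fun z hz => by
      simp only [mem_erase] at hz
      simp only [mem_sdiff, mem_insert, mem_singleton, not_or]
      exact ⟨hz.2, hz.1, fun h => hx.2.2 (h ▸ hz.2), fun h => hy.2.2 (h ▸ hz.2)⟩
    have := card_le_card this
    rw [card_erase_of_mem hw] at this
    omega
  push Not at hfar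
  have hcount := card_compl_insert_neighborFinset_mul_le_degree hδ u hfar
  rw [card_compl, card_insert_of_notMem (notMem_neighborFinset_self _ _), hN] at hcount
  -- `o` vertices lie outside `N[u]`, and each has at least `b` neighbours inside it
  obtain ⟨o, ho⟩ : ∃ o, Fintype.card V - (H.degree u + 1) = o := ⟨_, rfl⟩
  obtain ⟨b, hb⟩ : ∃ b, k + 1 - o = b := ⟨_, rfl⟩
  rw [ho, hb] at hcount
  rcases (by omega : H.degree u = k + 1 ∨ H.degree u = k + 2) with hd | hd
  · obtain ⟨o, rfl⟩ : ∃ o', o = o' + 4 := ⟨o - 4, by omega⟩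
    obtain ⟨b, rfl⟩ : ∃ b', b = b' + 2 := ⟨b - 2, by omega⟩
    nlinarith [show k = o + b + 5 by omega]
  · obtain ⟨o, rfl⟩ : ∃ o', o = o' + 3 := ⟨o - 3, by omega⟩
    obtain ⟨b, rfl⟩ : ∃ b', b = b' + 3 := ⟨b - 3, by omega⟩
    nlinarith [show k = o + b + 5 by omega]

lemma starGraph_isContained_or_treeT2_isContained_compl {V : Type*} [Fintype V] [DecidableEq V]
    (G : SimpleGraph V) [DecidableRel G.Adj] {m n : ℕ} (hm : 7 ≤ m) (hmn : m + 2 ≤ n)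
    (hmo : Odd m) (hno : Odd n) (hV : Fintype.card V = m + n - 5) (r : Fin m) :
    SimpleGraph.starGraph r ⊑ G ∨ treeT2 n ⊑ Gᶜ := by
  by_cases hstar : ∃ v, m - 1 ≤ G.degree v
  · exact .inl ((starGraph_isContained_iff r G).2 (by simpa using hstar))
  push Not at hstar
  obtain ⟨u, hu⟩ : ∃ u, G.degree u + 3 ≤ m := by
    by_contra! h
    have hreg : G.IsRegularOfDegree (m - 2) := fun v => by have := hstar v; have := h v; omega
    refine Nat.not_even_iff_odd.2 ?_ hreg.even_card_mul
    obtain ⟨a, rfl⟩ := hmo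
    obtain ⟨b, rfl⟩ := hno
    exact Nat.odd_mul.2 ⟨⟨a + b - 2, by omega⟩, ⟨a - 1, by omega⟩⟩
  refine .inr (treeT2_isContained_of_le_degree (u := u) (by omega) (by omega) (fun v => ?_) ?_)
  · have := hstar v
    rw [degree_compl]
    omega
  · rw [degree_compl]
    omega

lemma exists_starGraph_free_treeT2_free_compl {m n : ℕ} (hm : 3 ≤ m) (hn : 4 ≤ n) (hmo : Odd m)
    (r : Fin m) : ∃ G : SimpleGraph (Fin (m + n - 6)),
      (SimpleGraph.starGraph r).Free G ∧ (treeT2 n).Free Gᶜ := by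
  obtain ⟨k, rfl⟩ : ∃ k, m = 2 * k + 3 := by obtain ⟨a, rfl⟩ := hmo; exact ⟨a - 1, by omega⟩
  have : NeZero (2 * k + 3 + n - 6) := ⟨by omega⟩
  have hreg := circulantGraph_Ioc_isRegularOfDegree (N := 2 * k + 3 + n - 6) (k := k) (by omega)
  refine ⟨circulantGraph (Ioc (0 : Fin (2 * k + 3 + n - 6)) ⟨k, by omega⟩ : Set _),
    fun h => ?_, fun h => ?_⟩
  · obtain ⟨v, hv⟩ := (starGraph_isContained_iff r _).1 h
    rw [hreg.degree_eq, Fintype.card_fin] at hv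
    omega
  · obtain ⟨v, hv⟩ := h.exists_le_degree ⟨0, by omega⟩
    rw [treeT2_degree_zero hn, hreg.compl.degree_eq, Fintype.card_fin] at hv
    omega

theorem stmt12 (m n : ℕ) (hm : 6 ≤ m) (hmn : m < n) (ho : Odd (m * n)) :
    ramseyNumber (_root_.starGraph m) (treeT2 n) = m + n - 5 := by
  obtain ⟨hmo, hno⟩ := Nat.odd_mul.1 ho
  have hm7 : 7 ≤ m := by obtain ⟨a, rfl⟩ := hmo; omega
  have hmn2 : m + 2 ≤ n := by obtain ⟨a, rfl⟩ := hmo; obtain ⟨b, rfl⟩ := hno; omega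
  rw [show m + n - 5 = m + n - 6 + 1 by omega, starGraph_eq_starGraph_zero (by omega)]
  refine ramseyNumber_eq_succ (fun G => ?_) ?_
  · simp only [contains_iff_isContained]
    classical
    exact starGraph_isContained_or_treeT2_isContained_compl G hm7 hmn2 hmo hno (by simp; omega) _
  · simpa only [contains_iff_isContained] using
      exists_starGraph_free_treeT2_free_compl (by omega) (by omega) hmo _
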